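/- Let G = ⟨a, b, c, s, t | sas⁻¹ = ab, sbs⁻¹ = b, scs⁻¹ = c, tat⁻¹ = ba, tbt⁻¹ = b, tct⁻¹ = c⟩. Then the centraliser of b in G is the subgroup generated by {b, s, t}, and the centraliser of c in G is the subgroup generated by {c, s, t}. -/

import Mathlib

/-- Generators of
`G = ⟨a,b,c,s,t | sas⁻¹=ab, sbs⁻¹=b, scs⁻¹=c, tat⁻¹=ba, tbt⁻¹=b, tct⁻¹=c⟩`. -/
inductive Gen
  | a | b | c | s | t

open FreeGroup in
/-- Relators of
`G = ⟨a,b,c,s,t | sas⁻¹=ab, sbs⁻¹=b, scs⁻¹=c, tat⁻¹=ba, tbt⁻¹=b, tct⁻¹=c⟩`. -/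
def ffRels : Set (FreeGroup Gen) :=
  { of Gen.s * of Gen.a * (of Gen.s)⁻¹ * (of Gen.a * of Gen.b)⁻¹,
    of Gen.s * of Gen.b * (of Gen.s)⁻¹ * (of Gen.b)⁻¹,
    of Gen.s * of Gen.c * (of Gen.s)⁻¹ * (of Gen.c)⁻¹,
    of Gen.t * of Gen.a * (of Gen.t)⁻¹ * (of Gen.b * of Gen.a)⁻¹,
    of Gen.t * of Gen.b * (of Gen.t)⁻¹ * (of Gen.b)⁻¹,
    of Gen.t * of Gen.c * (of Gen.t)⁻¹ * (of Gen.c)⁻¹ }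

/-!
The group `G` is the semidirect product `F(a, b, c) ⋊ F(s, t)` in which `s` and `t` act by the
transvections `a ↦ ab` and `a ↦ ba` fixing `b` and `c`: the presentation maps to this model and
has a retraction back, so the map is injective. Since `b` and `c` are fixed by the action, an
element `(w, u)` of the model commutes with `b` (resp. `c`) exactly when `w` does in the free group
`F(a, b, c)`, and centralisers of basis elements of a free group are cyclic. So every element of
`C_G(b)` is `b ^ k` times a word in `s` and `t`.
-/

namespace FreeGroup

variable {α : Type*}

lemma mk_singleton_mem_zpowers (x : α) (b : Bool) : mk [(x, b)] ∈ Subgroup.zpowers (of x) := by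
  cases b
  · exact inv_mem (Subgroup.mem_zpowers (of x))
  · exact Subgroup.mem_zpowers (of x)

variable [DecidableEq α]

lemma norm_mk_singleton_mul_lt {w : FreeGroup α} {x : α} {b : Bool} {L : List (α × Bool)}
    (hw : w.toWord = (x, b) :: L) : norm (mk [(x, !b)] * w) < norm w := by
  have hcancel : mk [(x, !b)] * w = mk L := by
    rw [← mk_toWord (x := w), hw, mul_mk]
    exact Quot.sound Red.Step.cons_not_rev
  calc norm (mk [(x, !b)] * w) = norm (mk L) := by rw [hcancel]
    _ ≤ L.length := norm_mk_le
    _ < norm w := by simp [norm, hw]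

lemma toWord_of_mul_of_fst_ne {w : FreeGroup α} {x : α} {a : α × Bool} {L : List (α × Bool)}
    (hw : w.toWord = a :: L) (ha : a.1 ≠ x) : (of x * w).toWord = (x, true) :: w.toWord := by
  rw [toWord_mul, toWord_of, List.singleton_append, reduce.cons, reduce_toWord, hw]
  simp [Ne.symm ha]

theorem centralizer_of_eq_zpowers (x : α) :
    Subgroup.centralizer {of x} = Subgroup.zpowers (of x) := by
  have hle : Subgroup.zpowers (of x) ≤ Subgroup.centralizer {of x} :=
    Subgroup.zpowers_le.mpr (Subgroup.mem_centralizer_singleton_iff.mpr rfl)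
  refine le_antisymm ?_ hle
  intro w hw
  induction hn : norm w using Nat.strong_induction_on generalizing w with
  | _ n ih =>
  rcases hL : w.toWord with _ | ⟨⟨y, b⟩, L⟩
  · rw [toWord_eq_nil_iff.mp hL]
    exact one_mem _
  by_cases hy : y = x
  · subst hy
    have hletter := mk_singleton_mem_zpowers y (!b)
    have hshorter : mk [(y, !b)] * w ∈ Subgroup.zpowers (of y) :=
      ih _ (hn ▸ norm_mk_singleton_mul_lt hL) (mul_mem (hle hletter) hw) rfl
    simpa only [inv_mul_cancel_left] using mul_mem (inv_mem hletter) hshorter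
  -- Now `x * w` is reduced as written, while the word of `w * x` is a sublist of `w ++ [x]`;
  -- equality of the two words forces `w` to start with `x`.
  · have hcomm : of x * w = w * of x := Subgroup.mem_centralizer_iff.mp hw _ rfl
    have hcons := toWord_of_mul_of_fst_ne hL hy
    have happend : (of x * w).toWord = w.toWord ++ [(x, true)] := by
      rw [hcomm]
      refine (toWord_mul_sublist w (of x)).eq_of_length ?_
      rw [← hcomm, hcons]
      simp
    rw [hcons, hL] at happend
    exact absurd (congrArg Prod.fst (List.cons.inj happend).1) (Ne.symm hy)

lemma lift_apply_eq_self_of_forall {ι N : Type*} [Group N] {σ : ι → MulAut N} {n : N}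
    (h : ∀ i, σ i n = n) (u : FreeGroup ι) : lift σ u n = n :=
  range_lift_le (s := MulAction.stabilizer (MulAut N) n) (by rintro _ ⟨i, rfl⟩; exact h i)
    ⟨u, rfl⟩

lemma conj_compat_of_forall_of {ι N H : Type*} [Group N] [Group H]
    {φ : FreeGroup ι →* MulAut N} {f₁ : N →* H} {f₂ : FreeGroup ι →* H}
    (h : ∀ i,
      f₁.comp (φ (of i)).toMonoidHom = (MulAut.conj (f₂ (of i))).toMonoidHom.comp f₁)
    (u : FreeGroup ι) :
    f₁.comp (φ u).toMonoidHom = (MulAut.conj (f₂ u)).toMonoidHom.comp f₁ := by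
  ext n
  simp only [MonoidHom.comp_apply, MulEquiv.coe_toMonoidHom, MulAut.conj_apply]
  induction u using FreeGroup.induction_on generalizing n with
  | C1 => simp
  | of i => exact DFunLike.congr_fun (h i) n
  | inv_of i hi =>
    have := hi ((φ (of i))⁻¹ n)
    rw [← MulAut.mul_apply, mul_inv_cancel, MulAut.one_apply] at this
    rw [_root_.map_inv, _root_.map_inv, this]
    group
  | mul u v hu hv =>
    rw [_root_.map_mul, MulAut.mul_apply, hu, hv, _root_.map_mul]
    group

end FreeGroup

namespace SemidirectProduct

variable {N G : Type*} [Group N] [Group G] {φ : G →* MulAut N}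

lemma mem_centralizer_inl_iff {n : N} (hn : ∀ g, φ g n = n) {x : N ⋊[φ] G} :
    x ∈ Subgroup.centralizer {inl n} ↔ x.left ∈ Subgroup.centralizer {n} := by
  simp only [Subgroup.mem_centralizer_singleton_iff, SemidirectProduct.ext_iff, mul_left,
    mul_right, left_inl, right_inl, map_one, MulAut.one_apply, hn, one_mul, mul_one, and_true]

end SemidirectProduct

namespace FreeByFree

open FreeGroup SemidirectProduct

inductive FiberGen
  | a | b | c
  deriving DecidableEq

inductive BaseGen
  | s | t

def twist : BaseGen → FiberGen → FreeGroup FiberGen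
  | .s, .a => of .a * of .b
  | .t, .a => of .b * of .a
  | _, x => of x

def untwist : BaseGen → FiberGen → FreeGroup FiberGen
  | .s, .a => of .a * (of .b)⁻¹
  | .t, .a => (of .b)⁻¹ * of .a
  | _, x => of x

def twistAut (i : BaseGen) : MulAut (FreeGroup FiberGen) :=
  MonoidHom.toMulEquiv (lift (twist i)) (lift (untwist i))
    (by ext x; cases i <;> cases x <;> simp [twist, untwist])
    (by ext x; cases i <;> cases x <;> simp [twist, untwist])

lemma twistAut_of (i : BaseGen) (x : FiberGen) : twistAut i (of x) = twist i x := lift_apply_of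

def action : FreeGroup BaseGen →* MulAut (FreeGroup FiberGen) := lift twistAut

lemma action_of (i : BaseGen) : action (of i) = twistAut i := lift_apply_of

abbrev Model := FreeGroup FiberGen ⋊[action] FreeGroup BaseGen

def fiberGen : FiberGen → Gen
  | .a => .a
  | .b => .b
  | .c => .c

def baseGen : BaseGen → Gen
  | .s => .s
  | .t => .t

def modelGen : Gen → Model
  | .a => inl (of .a)
  | .b => inl (of .b)
  | .c => inl (of .c)
  | .s => inr (of .s)
  | .t => inr (of .t)

lemma inr_mul_inl_mul_inr_inv (i : BaseGen) (n : FreeGroup FiberGen) :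
    (inr (of i) * inl n * (inr (of i))⁻¹ : Model) = inl (twistAut i n) := by
  rw [← _root_.map_inv, ← inl_aut, action_of]

def toModel : PresentedGroup ffRels →* Model :=
  PresentedGroup.toGroup (f := modelGen) <| by
    rintro r (rfl | rfl | rfl | rfl | rfl | rfl) <;>
      simp [modelGen, inr_mul_inl_mul_inr_inv, twistAut_of, twist]

def fiberHom : FreeGroup FiberGen →* PresentedGroup ffRels :=
  lift fun x => PresentedGroup.of (fiberGen x)

def baseHom : FreeGroup BaseGen →* PresentedGroup ffRels :=
  lift fun i => PresentedGroup.of (baseGen i)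

lemma fiberHom_twistAut (i : BaseGen) (x : FiberGen) :
    fiberHom (twistAut i (of x)) = baseHom (of i) * fiberHom (of x) * (baseHom (of i))⁻¹ := by
  cases i <;> cases x <;>
    exact (PresentedGroup.mk_eq_mk_of_mul_inv_mem (by simp [ffRels, fiberGen, baseGen])).symm

def ofModel : Model →* PresentedGroup ffRels :=
  SemidirectProduct.lift fiberHom baseHom <| conj_compat_of_forall_of fun i =>
    FreeGroup.ext_hom _ _ fun x => by simp [action_of, fiberHom_twistAut]

lemma ofModel_comp_toModel : ofModel.comp toModel = MonoidHom.id _ :=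
  PresentedGroup.ext fun x => by
    cases x <;> simp [toModel, ofModel, modelGen, fiberHom, baseHom, fiberGen, baseGen]

lemma ofModel_toModel (g : PresentedGroup ffRels) : ofModel (toModel g) = g :=
  DFunLike.congr_fun ofModel_comp_toModel g

lemma toModel_injective : Function.Injective toModel :=
  Function.LeftInverse.injective ofModel_toModel

lemma fiberHom_left_mul_baseHom_right (g : PresentedGroup ffRels) :
    fiberHom (toModel g).left * baseHom (toModel g).right = g := by
  conv_rhs => rw [← ofModel_toModel g, ← inl_left_mul_inr_right (toModel g)]
  rw [_root_.map_mul, ofModel, lift_inl, lift_inr]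

lemma toModel_fiberGen (x : FiberGen) :
    toModel (PresentedGroup.of (fiberGen x)) = inl (of x) := by
  cases x <;> exact PresentedGroup.toGroup.of _

lemma toModel_baseGen (i : BaseGen) :
    toModel (PresentedGroup.of (baseGen i)) = inr (of i) := by
  cases i <;> exact PresentedGroup.toGroup.of _

lemma baseGen_commute_fiberGen {i : BaseGen} {x : FiberGen} (hx : twist i x = of x) :
    Commute (PresentedGroup.of (rels := ffRels) (baseGen i)) (PresentedGroup.of (fiberGen x)) := by
  apply toModel_injective
  rw [_root_.map_mul, _root_.map_mul, toModel_fiberGen, toModel_baseGen]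
  exact mul_inv_eq_iff_eq_mul.mp (by rw [inr_mul_inl_mul_inr_inv, twistAut_of, hx])

theorem centralizer_fiberGen (x : FiberGen) (hx : ∀ i, twist i x = of x) :
    Subgroup.centralizer {PresentedGroup.of (rels := ffRels) (fiberGen x)} =
      Subgroup.closure
        {PresentedGroup.of (fiberGen x), PresentedGroup.of Gen.s, PresentedGroup.of Gen.t} := by
  refine le_antisymm (fun g hg => ?_) ?_
  · have hmodel : toModel g ∈ Subgroup.centralizer {inl (of x)} := by
      have := Subgroup.map_centralizer_le_centralizer_image _ toModel ⟨g, hg, rfl⟩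
      rwa [Set.image_singleton, toModel_fiberGen] at this
    have hfixed : ∀ u, action u (of x) = of x :=
      lift_apply_eq_self_of_forall fun i => (twistAut_of i x).trans (hx i)
    rw [mem_centralizer_inl_iff hfixed, centralizer_of_eq_zpowers] at hmodel
    obtain ⟨k, hk⟩ := Subgroup.mem_zpowers_iff.mp hmodel
    rw [← fiberHom_left_mul_baseHom_right g, ← hk, _root_.map_zpow]
    refine mul_mem (zpow_mem (Subgroup.subset_closure (by simp [fiberHom])) k) ?_
    refine range_lift_le (fun _ ⟨i, hi⟩ => Subgroup.subset_closure ?_) ⟨_, rfl⟩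
    cases i <;> simp [← hi, baseGen]
  · rw [Subgroup.closure_le]
    rintro _ (rfl | rfl | rfl) <;> refine Subgroup.mem_centralizer_singleton_iff.mpr ?_
    exacts [rfl, baseGen_commute_fiberGen (hx .s), baseGen_commute_fiberGen (hx .t)]

end FreeByFree

/-- In `G`: `C_G(b) = ⟨b, s, t⟩` and `C_G(c) = ⟨c, s, t⟩`. -/
theorem centralizer_b_c_ff :
    Subgroup.centralizer {(PresentedGroup.of Gen.b : PresentedGroup ffRels)} =
      Subgroup.closure
        {PresentedGroup.of Gen.b, PresentedGroup.of Gen.s, PresentedGroup.of Gen.t} ∧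
    Subgroup.centralizer {(PresentedGroup.of Gen.c : PresentedGroup ffRels)} =
      Subgroup.closure
        {PresentedGroup.of Gen.c, PresentedGroup.of Gen.s, PresentedGroup.of Gen.t} :=
  ⟨FreeByFree.centralizer_fiberGen .b (by rintro (_ | _) <;> rfl),
    FreeByFree.centralizer_fiberGen .c (by rintro (_ | _) <;> rfl)⟩
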